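/- CFA Coherence: if Γ, ϱ ⊨ e (the pair (Γ, ϱ) is an acceptable 0CFA analysis of the labelled expression e) and e →ₙ e', then Γ, ϱ ⊨ e'. That is, acceptability of the flow analysis is preserved by evaluation. -/
import Mathlib


/-- Markers for the augmented semantics. -/
abbrev Marker := String
/-- Program-point labels. -/
abbrev Label := Nat

/-- Atomic constants of SLamJS. -/
inductive Const where
  | undef | null
  | bool (b : Bool)
  | str (s : String)
  | num (n : Int)

/-- Labelled SLamJS expressions: every node carries a label.
Environments are total functions `String → LExp`, with `hole` as "unbound". -/
inductive LExp where
  | const : Label → Const → LExp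
  | var : Label → String → LExp
  | fn : Label → String → LExp → LExp
  | app : Label → LExp → LExp → LExp
  | box : Label → LExp → LExp
  | unbox : Label → LExp → LExp
  | run : Label → LExp → LExp
  | ite : Label → LExp → LExp → LExp → LExp
  | clos : Label → LExp → (String → LExp) → LExp
  | runIn : Label → LExp → (String → LExp) → LExp
  | mark : Label → Marker → LExp → LExp
  | hole : Label → LExp

namespace LExp

/-- The (outer) label of an expression. -/
def lbl : LExp → Label
  | const ℓ _ => ℓ | var ℓ _ => ℓ | fn ℓ _ _ => ℓ | app ℓ _ _ => ℓ
  | box ℓ _ => ℓ | unbox ℓ _ => ℓ | run ℓ _ => ℓ | ite ℓ _ _ _ => ℓ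
  | clos ℓ _ _ => ℓ | runIn ℓ _ _ => ℓ | mark ℓ _ _ => ℓ | hole ℓ => ℓ

/-- Replace the outer label of an expression. -/
def setLbl : LExp → Label → LExp
  | const _ k, ℓ => const ℓ k
  | var _ x, ℓ => var ℓ x
  | fn _ x e, ℓ => fn ℓ x e
  | app _ e1 e2, ℓ => app ℓ e1 e2
  | box _ e, ℓ => box ℓ e
  | unbox _ e, ℓ => unbox ℓ e
  | run _ e, ℓ => run ℓ e
  | ite _ e1 e2 e3, ℓ => ite ℓ e1 e2 e3
  | clos _ e ρ, ℓ => clos ℓ e ρ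
  | runIn _ e ρ, ℓ => runIn ℓ e ρ
  | mark _ m e, ℓ => mark ℓ m e
  | hole _, ℓ => hole ℓ

/-- `(t, ρ)` with the label of `t` on the closure node. -/
def cl (e : LExp) (ρ : String → LExp) : LExp := clos (lbl e) e ρ

/-- Stage-`n` values. -/
inductive IsVal : Nat → LExp → Prop where
  | closV : ∀ ℓ ℓ' x e ρ, IsVal 0 (clos ℓ (fn ℓ' x e) ρ)
  | constV : ∀ n ℓ k, IsVal n (const ℓ k)
  | boxV : ∀ n ℓ v, IsVal (n+1) v → IsVal n (box ℓ v)
  | varV : ∀ n ℓ x, IsVal (n+1) (var ℓ x)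
  | fnV : ∀ n ℓ x e, IsVal (n+1) e → IsVal (n+1) (fn ℓ x e)
  | appV : ∀ n ℓ e1 e2, IsVal (n+1) e1 → IsVal (n+1) e2 → IsVal (n+1) (app ℓ e1 e2)
  | runV : ∀ n ℓ e, IsVal (n+1) e → IsVal (n+1) (run ℓ e)
  | iteV : ∀ n ℓ e1 e2 e3, IsVal (n+1) e1 → IsVal (n+1) e2 → IsVal (n+1) e3 →
      IsVal (n+1) (ite ℓ e1 e2 e3)
  | unboxV : ∀ n ℓ e, IsVal (n+1) e → IsVal (n+2) (unbox ℓ e)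
  | markV : ∀ n ℓ m v, IsVal n v → IsVal n (mark ℓ m v)
  | holeV : ∀ n ℓ, IsVal n (hole ℓ)

/-- Labelled top-level reduction `e ⇢ₙ e'` of the augmented semantics. -/
inductive Red : Nat → LExp → LExp → Prop where
  -- environment propagation
  | constE : ∀ n ℓ ℓ1 k ρ, Red n (clos ℓ (const ℓ1 k) ρ) (const ℓ k)
  | varE : ∀ n ℓ ℓ1 x ρ, Red (n+1) (clos ℓ (var ℓ1 x) ρ) (var ℓ x)
  | fnE : ∀ n ℓ ℓ1 x e ρ, Red (n+1) (clos ℓ (fn ℓ1 x e) ρ) (fn ℓ x (cl e ρ))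
  | appE : ∀ n ℓ ℓ1 e1 e2 ρ,
      Red n (clos ℓ (app ℓ1 e1 e2) ρ) (app ℓ (cl e1 ρ) (cl e2 ρ))
  | boxE : ∀ n ℓ ℓ1 e ρ, Red n (clos ℓ (box ℓ1 e) ρ) (box ℓ (cl e ρ))
  | unboxE : ∀ n ℓ ℓ1 e ρ, Red n (clos ℓ (unbox ℓ1 e) ρ) (unbox ℓ (cl e ρ))
  | runE0 : ∀ ℓ ℓ1 e ρ, Red 0 (clos ℓ (run ℓ1 e) ρ) (runIn ℓ (cl e ρ) ρ)
  | runES : ∀ n ℓ ℓ1 e ρ, Red (n+1) (clos ℓ (run ℓ1 e) ρ) (run ℓ (cl e ρ))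
  | iteE : ∀ n ℓ ℓ1 e1 e2 e3 ρ,
      Red n (clos ℓ (ite ℓ1 e1 e2 e3) ρ) (ite ℓ (cl e1 ρ) (cl e2 ρ) (cl e3 ρ))
  | markE : ∀ n ℓ ℓ1 m e ρ, Red n (clos ℓ (mark ℓ1 m e) ρ) (mark ℓ m (cl e ρ))
  | holeE : ∀ n ℓ ℓ1 ρ, Red n (clos ℓ (hole ℓ1) ρ) (hole ℓ)
  -- proper reduction
  | lookup : ∀ ℓ ℓ1 x ρ, Red 0 (clos ℓ (var ℓ1 x) ρ) (setLbl (ρ x) ℓ)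
  | apply : ∀ ℓ2 ℓ3 ℓf x b ρ v, IsVal 0 v →
      Red 0 (app ℓ3 (clos ℓ2 (fn ℓf x b) ρ) v) (cl b (Function.update ρ x v))
  | unboxR : ∀ ℓ1 ℓ2 v, IsVal 1 v → Red 1 (unbox ℓ2 (box ℓ1 v)) (setLbl v ℓ2)
  | runR : ∀ ℓ1 ℓ2 v ρ, IsVal 1 v → Red 0 (runIn ℓ2 (box ℓ1 v) ρ) (clos ℓ2 v ρ)
  | ifTrue : ∀ ℓ ℓg e1 e2, Red 0 (ite ℓ (const ℓg (.bool true)) e1 e2) e1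
  | ifFalse : ∀ ℓ ℓg e1 e2, Red 0 (ite ℓ (const ℓg (.bool false)) e1 e2) e2
  -- lifts
  | liftApp : ∀ ℓ2 ℓ3 ℓm m t ρ v, IsVal 0 v →
      Red 0 (app ℓ3 (clos ℓ2 (mark ℓm m t) ρ) v) (mark ℓ3 m (app ℓ3 (cl t ρ) v))
  | liftIf : ∀ ℓ ℓ0 m v e1 e2, IsVal 0 v →
      Red 0 (ite ℓ (mark ℓ0 m v) e1 e2) (mark ℓ m (ite ℓ v e1 e2))
  | liftUnbox : ∀ ℓ1 ℓ2 m v, IsVal 1 v →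
      Red 1 (unbox ℓ2 (mark ℓ1 m v)) (mark ℓ2 m (unbox ℓ2 v))
  | liftRunIn : ∀ ℓ1 ℓ2 m v ρ, IsVal 0 v →
      Red 0 (runIn ℓ2 (mark ℓ1 m v) ρ) (mark ℓ2 m (runIn ℓ2 v ρ))

/-- Labelled contextual evaluation `e →ₘ e'`. -/
inductive Ev : Nat → LExp → LExp → Prop where
  | red : ∀ n e e', Red n e e' → Ev n e e'
  | appL : ∀ m ℓ e1 e1' e2, Ev m e1 e1' → Ev m (app ℓ e1 e2) (app ℓ e1' e2)
  | appR : ∀ m ℓ v e e', IsVal m v → Ev m e e' → Ev m (app ℓ v e) (app ℓ v e')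
  | fnB : ∀ m ℓ x e e', Ev (m+1) e e' → Ev (m+1) (fn ℓ x e) (fn ℓ x e')
  | boxC : ∀ m ℓ e e', Ev (m+1) e e' → Ev m (box ℓ e) (box ℓ e')
  | unboxC : ∀ m ℓ e e', Ev m e e' → Ev (m+1) (unbox ℓ e) (unbox ℓ e')
  | runC : ∀ m ℓ e e', Ev m e e' → Ev m (run ℓ e) (run ℓ e')
  | runInC : ∀ m ℓ e e' ρ, Ev m e e' → Ev m (runIn ℓ e ρ) (runIn ℓ e' ρ)
  | closC : ∀ m ℓ e e' ρ, Ev m e e' → Ev m (clos ℓ e ρ) (clos ℓ e' ρ)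
  | iteG : ∀ m ℓ e1 e1' e2 e3, Ev m e1 e1' → Ev m (ite ℓ e1 e2 e3) (ite ℓ e1' e2 e3)
  | iteT : ∀ m ℓ v e2 e2' e3, IsVal (m+1) v → Ev (m+1) e2 e2' →
      Ev (m+1) (ite ℓ v e2 e3) (ite ℓ v e2' e3)
  | iteF : ∀ m ℓ v1 v2 e3 e3', IsVal (m+1) v1 → IsVal (m+1) v2 → Ev (m+1) e3 e3' →
      Ev (m+1) (ite ℓ v1 v2 e3) (ite ℓ v1 v2 e3')
  | markC : ∀ m ℓ mk e e', Ev m e e' → Ev m (mark ℓ mk e) (mark ℓ mk e')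

/-- One evaluation step at some level. -/
def StepAny (e e' : LExp) : Prop := ∃ m, Ev m e e'

/-- `→*_⋄`: zero or more evaluation steps at arbitrary levels. -/
def EvStar : LExp → LExp → Prop := Relation.ReflTransGen StepAny

end LExp

/-- Abstract values of the 0CFA. -/
inductive AbsVal where
  | NULL | UNDEF | BOOL | NUM | STR
  | FUN (x : String) (e : LExp)
  | BOX (e : LExp)

/-- Abstraction `⌈k⌉` of a literal. -/
def absConst : Const → AbsVal
  | .null => .NULL
  | .undef => .UNDEF
  | .bool _ => .BOOL
  | .num _ => .NUM
  | .str _ => .STR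

/-- Abstract cache. -/
abbrev AbsCache := Label → Set AbsVal
/-- Abstract environment (over parameter names). -/
abbrev AbsEnvMap := String → Set AbsVal

open LExp in
mutual
/-- The 0CFA acceptability judgement `Γ, ϱ ⊨ e`. -/
inductive CfaAcc (Γ : AbsCache) (ϱ : AbsEnvMap) : LExp → Prop where
  | const : ∀ ℓ k, absConst k ∈ Γ ℓ → CfaAcc Γ ϱ (const ℓ k)
  | var : ∀ ℓ x, ϱ x ⊆ Γ ℓ → CfaAcc Γ ϱ (var ℓ x)
  | fn : ∀ ℓ x e ν, CfaAcc Γ ϱ e →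
      ν ∈ Γ ℓ → Approx Γ ϱ ν (fn ℓ x e) → CfaAcc Γ ϱ (fn ℓ x e)
  | app : ∀ ℓ e1 e2, CfaAcc Γ ϱ e1 → CfaAcc Γ ϱ e2 →
      (∀ x b, AbsVal.FUN x b ∈ Γ (lbl e1) → Γ (lbl e2) ⊆ ϱ x ∧ Γ (lbl b) ⊆ Γ ℓ) →
      CfaAcc Γ ϱ (app ℓ e1 e2)
  | box : ∀ ℓ e ν, CfaAcc Γ ϱ e →
      ν ∈ Γ ℓ → Approx Γ ϱ ν (box ℓ e) → CfaAcc Γ ϱ (box ℓ e)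
  | unbox : ∀ ℓ e, CfaAcc Γ ϱ e →
      (∀ e', AbsVal.BOX e' ∈ Γ (lbl e) → Γ (lbl e') ⊆ Γ ℓ) → CfaAcc Γ ϱ (unbox ℓ e)
  | run : ∀ ℓ e, CfaAcc Γ ϱ e →
      (∀ e', AbsVal.BOX e' ∈ Γ (lbl e) → Γ (lbl e') ⊆ Γ ℓ) → CfaAcc Γ ϱ (run ℓ e)
  | runIn : ∀ ℓ e ρ, CfaAcc Γ ϱ e → AccEnv Γ ϱ ρ →
      (∀ e', AbsVal.BOX e' ∈ Γ (lbl e) → Γ (lbl e') ⊆ Γ ℓ) → CfaAcc Γ ϱ (runIn ℓ e ρ)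
  | ite : ∀ ℓ e1 e2 e3, CfaAcc Γ ϱ e1 → CfaAcc Γ ϱ e2 → CfaAcc Γ ϱ e3 →
      Γ (lbl e2) ⊆ Γ ℓ → Γ (lbl e3) ⊆ Γ ℓ → CfaAcc Γ ϱ (ite ℓ e1 e2 e3)
  | clos : ∀ ℓ e ρ, CfaAcc Γ ϱ e → AccEnv Γ ϱ ρ → Γ (lbl e) ⊆ Γ ℓ →
      CfaAcc Γ ϱ (clos ℓ e ρ)
  | mark : ∀ ℓ m e, CfaAcc Γ ϱ e → Γ (lbl e) ⊆ Γ ℓ → CfaAcc Γ ϱ (mark ℓ m e)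
  | hole : ∀ ℓ, CfaAcc Γ ϱ (hole ℓ)

/-- Acceptability of an explicit environment `Γ, ϱ ⊨ ρ`. -/
inductive AccEnv (Γ : AbsCache) (ϱ : AbsEnvMap) : (String → LExp) → Prop where
  | intro : ∀ ρ, (∀ x, CfaAcc Γ ϱ (ρ x)) → (∀ x, Γ (lbl (ρ x)) ⊆ ϱ x) → AccEnv Γ ϱ ρ

/-- The approximation judgement `Γ, ϱ ⊨ ν ≈ t`, closed under reduction. -/
inductive Approx (Γ : AbsCache) (ϱ : AbsEnvMap) : AbsVal → LExp → Prop where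
  | constA : ∀ ℓ k, Approx Γ ϱ (absConst k) (const ℓ k)
  | funA : ∀ ℓ x e, Approx Γ ϱ (.FUN x e) (fn ℓ x e)
  | boxA : ∀ ℓ e, Approx Γ ϱ (.BOX e) (box ℓ e)
  | redA : ∀ n ν t t', Approx Γ ϱ ν t → Ev n t t' → Approx Γ ϱ ν t'
  | closA : ∀ ℓ ν t ρ, Approx Γ ϱ ν t → AccEnv Γ ϱ ρ → Approx Γ ϱ ν (clos ℓ t ρ)
end

/-- Nodes of the information-flow graph: `Label ⊎ Name ⊎ Marker`. -/
inductive Node where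
  | lab : Label → Node
  | nm : String → Node
  | mk : Marker → Node

open LExp Node in
mutual
/-- The information-flow constraints on the relation `F` (`⤳`), per the
constraint table: `FlowOk Γ ϱ F e` holds when all (direct and indirect)
flow constraints generated by `e` are satisfied by `F`. -/
inductive FlowOk (Γ : AbsCache) (ϱ : AbsEnvMap) (F : Node → Node → Prop) : LExp → Prop where
  | const : ∀ ℓ k, FlowOk Γ ϱ F (const ℓ k)
  | var : ∀ ℓ x, F (nm x) (lab ℓ) → FlowOk Γ ϱ F (var ℓ x)
  | fn : ∀ ℓ x e, FlowOk Γ ϱ F e → FlowOk Γ ϱ F (fn ℓ x e)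
  | app : ∀ ℓ e1 e2, FlowOk Γ ϱ F e1 → FlowOk Γ ϱ F e2 →
      (∀ x b, AbsVal.FUN x b ∈ Γ (lbl e1) →
        F (lab (lbl e2)) (nm x) ∧ F (lab (lbl b)) (lab ℓ)) →
      F (lab (lbl e1)) (lab ℓ) → FlowOk Γ ϱ F (app ℓ e1 e2)
  | ite : ∀ ℓ e1 e2 e3, FlowOk Γ ϱ F e1 → FlowOk Γ ϱ F e2 → FlowOk Γ ϱ F e3 →
      F (lab (lbl e2)) (lab ℓ) → F (lab (lbl e3)) (lab ℓ) →
      F (lab (lbl e1)) (lab ℓ) → FlowOk Γ ϱ F (ite ℓ e1 e2 e3)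
  | clos : ∀ ℓ e ρ, FlowOk Γ ϱ F e → FlowOkEnv Γ ϱ F ρ →
      F (lab (lbl e)) (lab ℓ) → FlowOk Γ ϱ F (clos ℓ e ρ)
  | mark : ∀ ℓ m e, FlowOk Γ ϱ F e →
      F (lab (lbl e)) (lab ℓ) → F (mk m) (lab ℓ) → FlowOk Γ ϱ F (mark ℓ m e)
  | box : ∀ ℓ e, FlowOk Γ ϱ F e → FlowOk Γ ϱ F (box ℓ e)
  | unbox : ∀ ℓ e, FlowOk Γ ϱ F e →
      (∀ e', AbsVal.BOX e' ∈ Γ (lbl e) → F (lab (lbl e')) (lab ℓ)) →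
      F (lab (lbl e)) (lab ℓ) → FlowOk Γ ϱ F (unbox ℓ e)
  | run : ∀ ℓ e, FlowOk Γ ϱ F e →
      (∀ e', AbsVal.BOX e' ∈ Γ (lbl e) → F (lab (lbl e')) (lab ℓ)) →
      F (lab (lbl e)) (lab ℓ) → FlowOk Γ ϱ F (run ℓ e)
  | runIn : ∀ ℓ e ρ, FlowOk Γ ϱ F e → FlowOkEnv Γ ϱ F ρ →
      (∀ e', AbsVal.BOX e' ∈ Γ (lbl e) → F (lab (lbl e')) (lab ℓ)) →
      F (lab (lbl e)) (lab ℓ) → FlowOk Γ ϱ F (runIn ℓ e ρ)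
  | hole : ∀ ℓ, FlowOk Γ ϱ F (hole ℓ)

/-- Flow constraints for an explicit environment. -/
inductive FlowOkEnv (Γ : AbsCache) (ϱ : AbsEnvMap) (F : Node → Node → Prop) :
    (String → LExp) → Prop where
  | intro : ∀ ρ, (∀ x, FlowOk Γ ϱ F (ρ x)) → (∀ x, F (lab (lbl (ρ x))) (nm x)) →
      FlowOkEnv Γ ϱ F ρ
end

/-- `Γ, ϱ, ⤳ ⊨_IF e`: 0CFA acceptability together with the flow constraints. -/
def SatIF (Γ : AbsCache) (ϱ : AbsEnvMap) (F : Node → Node → Prop) (e : LExp) : Prop :=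
  CfaAcc Γ ϱ e ∧ FlowOk Γ ϱ F e

/-- A stage-0 value built only from markers and constants. -/
inductive MCVal : LExp → Prop where
  | const : ∀ ℓ k, MCVal (LExp.const ℓ k)
  | mark : ∀ ℓ m v, MCVal v → MCVal (LExp.mark ℓ m v)

open Classical in
/-- `M`-erasure on labelled expressions. -/
noncomputable def eraseL (M : Set Marker) : LExp → LExp
  | .const ℓ k => .const ℓ k
  | .var ℓ x => .var ℓ x
  | .fn ℓ x e => .fn ℓ x (eraseL M e)
  | .app ℓ e1 e2 => .app ℓ (eraseL M e1) (eraseL M e2)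
  | .box ℓ e => .box ℓ (eraseL M e)
  | .unbox ℓ e => .unbox ℓ (eraseL M e)
  | .run ℓ e => .run ℓ (eraseL M e)
  | .ite ℓ e1 e2 e3 => .ite ℓ (eraseL M e1) (eraseL M e2) (eraseL M e3)
  | .clos ℓ e ρ => .clos ℓ (eraseL M e) (fun x => eraseL M (ρ x))
  | .runIn ℓ e ρ => .runIn ℓ (eraseL M e) (fun x => eraseL M (ρ x))
  | .mark ℓ m e => if m ∈ M then .mark ℓ m (eraseL M e) else .hole ℓ
  | .hole ℓ => .hole ℓ

/-- The set of markers occurring in a labelled expression. -/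
def markersL : LExp → Set Marker
  | .const _ _ => ∅
  | .var _ _ => ∅
  | .fn _ _ e => markersL e
  | .app _ e1 e2 => markersL e1 ∪ markersL e2
  | .box _ e => markersL e
  | .unbox _ e => markersL e
  | .run _ e => markersL e
  | .ite _ e1 e2 e3 => markersL e1 ∪ markersL e2 ∪ markersL e3
  | .clos _ e ρ => markersL e ∪ ⋃ x, markersL (ρ x)
  | .runIn _ e ρ => markersL e ∪ ⋃ x, markersL (ρ x)
  | .mark _ m e => insert m (markersL e)
  | .hole _ => ∅

open LExp

section Coherence

/-- Custom induction principle for `Approx` alone. -/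
theorem approx_ind {Γ : AbsCache} {ϱ : AbsEnvMap} {P : AbsVal → LExp → Prop}
    (hconst : ∀ ℓ k, P (absConst k) (const ℓ k))
    (hfun : ∀ ℓ x e, P (.FUN x e) (fn ℓ x e))
    (hbox : ∀ ℓ e, P (.BOX e) (box ℓ e))
    (hred : ∀ n ν t t', Approx Γ ϱ ν t → Ev n t t' → P ν t → P ν t')
    (hclos : ∀ ℓ ν t ρ, Approx Γ ϱ ν t → AccEnv Γ ϱ ρ → P ν t → P ν (clos ℓ t ρ))
    {ν : AbsVal} {t : LExp} (h : Approx Γ ϱ ν t) : P ν t := by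
  refine Approx.rec (motive_1 := fun _ _ => True) (motive_2 := fun _ _ => True)
    (motive_3 := fun ν t _ => P ν t) ?_ ?_ ?_ ?_ ?_ ?_ ?_ ?_ ?_ ?_ ?_ ?_ ?_ ?_ ?_ ?_ ?_ ?_ h
  · intros; trivial
  · intros; trivial
  · intros; trivial
  · intros; trivial
  · intros; trivial
  · intros; trivial
  · intros; trivial
  · intros; trivial
  · intros; trivial
  · intros; trivial
  · intros; trivial
  · intros; trivial
  · intros; trivial
  · exact hconst
  · exact hfun
  · exact hbox
  · exact fun n ν t t' ha hev ih => hred n ν t t' ha hev ih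
  · exact fun ℓ ν t ρ ha henv ih _ => hclos ℓ ν t ρ ha henv ih

theorem setLbl_lbl (t : LExp) (ℓ : Label) : lbl (setLbl t ℓ) = ℓ := by cases t <;> rfl

theorem lbl_ev_succ {m : Nat} {e e' : LExp} (h : Ev (m+1) e e') : lbl e' = lbl e := by
  cases h with
  | red _ _ _ hr => cases hr <;> first | rfl | exact setLbl_lbl _ _
  | _ => rfl

/-- Shapes of expressions that can be approximated. -/
inductive Shape : LExp → Prop where
  | const : ∀ ℓ k, Shape (.const ℓ k)
  | fn : ∀ ℓ x e, Shape (.fn ℓ x e)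
  | box : ∀ ℓ e, Shape (.box ℓ e)
  | clos : ∀ ℓ u ρ, Shape u → Shape (.clos ℓ u ρ)

theorem shape_ev {n : Nat} {t t' : LExp} (hev : Ev n t t') (hs : Shape t) : Shape t' := by
  induction hev with
  | red _ _ _ hr =>
    cases hr <;> (try cases hs) <;> rename_i hs' <;> cases hs' <;>
      first
        | exact Shape.const _ _
        | exact Shape.fn _ _ _
        | exact Shape.box _ _
  | closC m ℓ e e' ρ _ ih => cases hs with | clos _ _ _ hu => exact Shape.clos _ _ _ (ih hu)
  | fnB => exact Shape.fn _ _ _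
  | boxC => exact Shape.box _ _
  | _ => cases hs

theorem approx_shape {Γ ϱ ν t} (h : Approx Γ ϱ ν t) : Shape t := by
  refine approx_ind (P := fun _ t => Shape t) ?_ ?_ ?_ ?_ ?_ h
  · exact fun ℓ k => Shape.const ℓ k
  · exact fun ℓ x e => Shape.fn ℓ x e
  · exact fun ℓ e => Shape.box ℓ e
  · exact fun n ν t t' _ hev ih => shape_ev hev ih
  · exact fun ℓ ν t ρ _ _ ih => Shape.clos ℓ t ρ ih

theorem ev_setLbl {n : Nat} {t t' : LExp} (hs : Shape t) (hev : Ev n t t') (ℓ : Label) :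
    Ev n (setLbl t ℓ) (setLbl t' ℓ) := by
  cases hev with
  | red _ _ _ hr =>
    cases hr <;> (try cases hs) <;> rename_i hs' <;> cases hs' <;>
      exact Ev.red _ _ _ (by constructor)
  | fnB _ _ _ _ _ h => exact Ev.fnB _ ℓ _ _ _ h
  | boxC _ _ _ _ h => exact Ev.boxC _ ℓ _ _ h
  | closC _ _ _ _ _ h => exact Ev.closC _ ℓ _ _ _ h
  | _ => cases hs

theorem approx_setLbl {Γ ϱ ν t} (h : Approx Γ ϱ ν t) : ∀ ℓ, Approx Γ ϱ ν (setLbl t ℓ) := by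
  refine approx_ind (P := fun ν t => ∀ ℓ, Approx Γ ϱ ν (setLbl t ℓ)) ?_ ?_ ?_ ?_ ?_ h
  · exact fun ℓ k ℓ' => Approx.constA ℓ' k
  · exact fun ℓ x e ℓ' => Approx.funA ℓ' x e
  · exact fun ℓ e ℓ' => Approx.boxA ℓ' e
  · exact fun n ν t t' ha hev ih ℓ =>
      Approx.redA n ν _ _ (ih ℓ) (ev_setLbl (approx_shape ha) hev ℓ)
  · exact fun ℓ ν t ρ ha henv ih ℓ' => Approx.closA ℓ' ν t ρ ha henv

/-- The clos-stripped core of `t` is a function with parameter `x` and body label `ℓb`. -/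
inductive FnCore : LExp → String → Label → Prop where
  | fn : ∀ ℓ x b, FnCore (.fn ℓ x b) x (lbl b)
  | clos : ∀ ℓ u ρ x ℓb, FnCore u x ℓb → FnCore (.clos ℓ u ρ) x ℓb

/-- The clos-stripped core of `t` is a box whose payload has label `ℓw`. -/
inductive BoxCore : LExp → Label → Prop where
  | box : ∀ ℓ e, BoxCore (.box ℓ e) (lbl e)
  | clos : ∀ ℓ u ρ ℓw, BoxCore u ℓw → BoxCore (.clos ℓ u ρ) ℓw

theorem ev_fnCore {n : Nat} {t t' : LExp} (hev : Ev n t t') (hs : Shape t) :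
    ∀ {x ℓb}, FnCore t' x ℓb → FnCore t x ℓb := by
  induction hev with
  | red _ _ _ hr =>
    intro x ℓb hc
    cases hr <;> (try cases hs) <;> rename_i hs' <;> cases hs' <;> cases hc
    case red.fnE.clos.fn.fn =>
      exact FnCore.clos _ _ _ _ _ (FnCore.fn _ _ _)
  | fnB _ _ _ _ _ h =>
    intro x ℓb hc
    cases hc
    rw [show lbl _ = _ from lbl_ev_succ h]
    exact FnCore.fn _ _ _
  | closC _ _ _ _ _ _ ih =>
    intro x ℓb hc
    cases hs with | clos _ _ _ hu =>
    cases hc with | clos _ _ _ _ _ hc' => exact FnCore.clos _ _ _ _ _ (ih hu hc')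
  | boxC => intro x ℓb hc; cases hc
  | _ => cases hs

theorem ev_boxCore {n : Nat} {t t' : LExp} (hev : Ev n t t') (hs : Shape t) :
    ∀ {ℓw}, BoxCore t' ℓw → BoxCore t ℓw := by
  induction hev with
  | red _ _ _ hr =>
    intro ℓw hc
    cases hr <;> (try cases hs) <;> rename_i hs' <;> cases hs' <;> cases hc
    case red.boxE.clos.box.box =>
      exact BoxCore.clos _ _ _ _ (BoxCore.box _ _)
  | boxC _ _ _ _ h =>
    intro ℓw hc
    cases hc
    rw [show lbl _ = _ from lbl_ev_succ h]
    exact BoxCore.box _ _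
  | closC _ _ _ _ _ _ ih =>
    intro ℓw hc
    cases hs with | clos _ _ _ hu =>
    cases hc with | clos _ _ _ _ hc' => exact BoxCore.clos _ _ _ _ (ih hu hc')
  | fnB => intro ℓw hc; cases hc
  | _ => cases hs

theorem approx_fnCore {Γ ϱ ν t} (h : Approx Γ ϱ ν t) :
    ∀ {x ℓb}, FnCore t x ℓb → ∃ b, ν = .FUN x b ∧ ℓb = lbl b := by
  refine approx_ind
    (P := fun ν t => ∀ {x ℓb}, FnCore t x ℓb → ∃ b, ν = .FUN x b ∧ ℓb = lbl b)
    ?_ ?_ ?_ ?_ ?_ h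
  · intro _ _ _ _ hc; cases hc
  · intro ℓ x e x' ℓb hc; cases hc; exact ⟨e, rfl, rfl⟩
  · intro _ _ _ _ hc; cases hc
  · intro n ν t t' ha hev ih x ℓb hc; exact ih (ev_fnCore hev (approx_shape ha) hc)
  · intro ℓ ν t ρ _ _ ih x ℓb hc
    cases hc with | clos _ _ _ _ _ hc' => exact ih hc'

theorem approx_boxCore {Γ ϱ ν t} (h : Approx Γ ϱ ν t) :
    ∀ {ℓw}, BoxCore t ℓw → ∃ e, ν = .BOX e ∧ ℓw = lbl e := by
  refine approx_ind
    (P := fun ν t => ∀ {ℓw}, BoxCore t ℓw → ∃ e, ν = .BOX e ∧ ℓw = lbl e)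
    ?_ ?_ ?_ ?_ ?_ h
  · intro _ _ _ hc; cases hc
  · intro _ _ _ _ hc; cases hc
  · intro ℓ e ℓw hc; cases hc; exact ⟨e, rfl, rfl⟩
  · intro n ν t t' ha hev ih ℓw hc; exact ih (ev_boxCore hev (approx_shape ha) hc)
  · intro ℓ ν t ρ _ _ ih ℓw hc
    cases hc with | clos _ _ _ _ hc' => exact ih hc'

theorem cfa_setLbl {Γ ϱ t} (h : CfaAcc Γ ϱ t) {ℓ : Label} (hsub : Γ (lbl t) ⊆ Γ ℓ) :
    CfaAcc Γ ϱ (setLbl t ℓ) := by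
  cases h with
  | const _ k hk => exact CfaAcc.const ℓ k (hsub hk)
  | var _ x hx => exact CfaAcc.var ℓ x (hx.trans hsub)
  | fn _ x e ν he hν hap =>
      exact CfaAcc.fn ℓ x e ν he (hsub hν) (approx_setLbl hap ℓ)
  | app _ e1 e2 h1 h2 hside =>
      exact CfaAcc.app ℓ e1 e2 h1 h2
        (fun x b hf => ⟨(hside x b hf).1, (hside x b hf).2.trans hsub⟩)
  | box _ e ν he hν hap =>
      exact CfaAcc.box ℓ e ν he (hsub hν) (approx_setLbl hap ℓ)
  | unbox _ e he hcon =>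
      exact CfaAcc.unbox ℓ e he (fun e' hb => (hcon e' hb).trans hsub)
  | run _ e he hcon =>
      exact CfaAcc.run ℓ e he (fun e' hb => (hcon e' hb).trans hsub)
  | runIn _ e ρ he henv hcon =>
      exact CfaAcc.runIn ℓ e ρ he henv (fun e' hb => (hcon e' hb).trans hsub)
  | ite _ e1 e2 e3 h1 h2 h3 f2 f3 =>
      exact CfaAcc.ite ℓ e1 e2 e3 h1 h2 h3 (f2.trans hsub) (f3.trans hsub)
  | clos _ e ρ he henv hf => exact CfaAcc.clos ℓ e ρ he henv (hf.trans hsub)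
  | mark _ m e he hf => exact CfaAcc.mark ℓ m e he (hf.trans hsub)
  | hole _ => exact CfaAcc.hole ℓ

theorem coherence_red {Γ : AbsCache} {ϱ : AbsEnvMap} {n : Nat} {e e' : LExp}
    (hr : Red n e e') (hacc : CfaAcc Γ ϱ e) :
    CfaAcc Γ ϱ e' ∧ Γ (lbl e') ⊆ Γ (lbl e) := by
  cases hr with
  | constE n ℓ ℓ1 k ρ =>
    cases hacc with | clos _ _ _ h1 henv hsub =>
    cases h1 with | const _ _ hk =>
    exact ⟨CfaAcc.const ℓ k (hsub hk), subset_rfl⟩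
  | varE n ℓ ℓ1 x ρ =>
    cases hacc with | clos _ _ _ h1 henv hsub =>
    cases h1 with | var _ _ hx =>
    exact ⟨CfaAcc.var ℓ x (hx.trans hsub), subset_rfl⟩
  | fnE n ℓ ℓ1 x e ρ =>
    cases hacc with | clos _ _ _ h1 henv hsub =>
    cases h1 with | fn _ _ _ ν he hν hap =>
    refine ⟨CfaAcc.fn ℓ x (cl e ρ) ν (CfaAcc.clos _ _ _ he henv subset_rfl) (hsub hν) ?_,
      subset_rfl⟩
    exact Approx.redA _ ν _ _ (Approx.closA ℓ ν _ ρ hap henv)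
      (Ev.red _ _ _ (Red.fnE n ℓ ℓ1 x e ρ))
  | appE n ℓ ℓ1 e1 e2 ρ =>
    cases hacc with | clos _ _ _ h1 henv hsub =>
    cases h1 with | app _ _ _ ha1 ha2 hside =>
    refine ⟨CfaAcc.app ℓ _ _ (CfaAcc.clos _ _ _ ha1 henv subset_rfl)
      (CfaAcc.clos _ _ _ ha2 henv subset_rfl) ?_, subset_rfl⟩
    intro x b hf
    exact ⟨(hside x b hf).1, (hside x b hf).2.trans hsub⟩
  | boxE n ℓ ℓ1 e ρ =>
    cases hacc with | clos _ _ _ h1 henv hsub =>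
    cases h1 with | box _ _ ν he hν hap =>
    refine ⟨CfaAcc.box ℓ _ ν (CfaAcc.clos _ _ _ he henv subset_rfl) (hsub hν) ?_, subset_rfl⟩
    exact Approx.redA _ ν _ _ (Approx.closA ℓ ν _ ρ hap henv)
      (Ev.red _ _ _ (Red.boxE n ℓ ℓ1 e ρ))
  | unboxE n ℓ ℓ1 e ρ =>
    cases hacc with | clos _ _ _ h1 henv hsub =>
    cases h1 with | unbox _ _ he hcon =>
    exact ⟨CfaAcc.unbox ℓ _ (CfaAcc.clos _ _ _ he henv subset_rfl)
      (fun e' hb => (hcon e' hb).trans hsub), subset_rfl⟩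
  | runE0 ℓ ℓ1 e ρ =>
    cases hacc with | clos _ _ _ h1 henv hsub =>
    cases h1 with | run _ _ he hcon =>
    exact ⟨CfaAcc.runIn ℓ _ ρ (CfaAcc.clos _ _ _ he henv subset_rfl) henv
      (fun e' hb => (hcon e' hb).trans hsub), subset_rfl⟩
  | runES n ℓ ℓ1 e ρ =>
    cases hacc with | clos _ _ _ h1 henv hsub =>
    cases h1 with | run _ _ he hcon =>
    exact ⟨CfaAcc.run ℓ _ (CfaAcc.clos _ _ _ he henv subset_rfl)
      (fun e' hb => (hcon e' hb).trans hsub), subset_rfl⟩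
  | iteE n ℓ ℓ1 e1 e2 e3 ρ =>
    cases hacc with | clos _ _ _ h1 henv hsub =>
    cases h1 with | ite _ _ _ _ ha1 ha2 ha3 f2 f3 =>
    exact ⟨CfaAcc.ite ℓ _ _ _ (CfaAcc.clos _ _ _ ha1 henv subset_rfl)
      (CfaAcc.clos _ _ _ ha2 henv subset_rfl) (CfaAcc.clos _ _ _ ha3 henv subset_rfl)
      (f2.trans hsub) (f3.trans hsub), subset_rfl⟩
  | markE n ℓ ℓ1 m e ρ =>
    cases hacc with | clos _ _ _ h1 henv hsub =>
    cases h1 with | mark _ _ _ he hf =>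
    exact ⟨CfaAcc.mark ℓ m _ (CfaAcc.clos _ _ _ he henv subset_rfl) (hf.trans hsub),
      subset_rfl⟩
  | holeE n ℓ ℓ1 ρ => exact ⟨CfaAcc.hole ℓ, subset_rfl⟩
  | lookup ℓ ℓ1 x ρ =>
    cases hacc with | clos _ _ _ h1 henv hsub =>
    cases h1 with | var _ _ hx =>
    cases henv with | intro _ hc hl =>
    have hsub2 : Γ (lbl (ρ x)) ⊆ Γ ℓ := (hl x).trans (hx.trans hsub)
    refine ⟨cfa_setLbl (hc x) hsub2, ?_⟩
    rw [setLbl_lbl]; exact subset_rfl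
  | apply ℓ2 ℓ3 ℓf x b ρ v hv =>
    cases hacc with | app _ _ _ h1 h2 hside =>
    cases h1 with | clos _ _ _ hf henv hsub =>
    cases hf with | fn _ _ _ ν hb hν hap =>
    obtain ⟨b', hveq, hlb⟩ := approx_fnCore hap (FnCore.fn ℓf x b)
    subst hveq
    obtain ⟨hflow, hres⟩ := hside x b' (hsub hν)
    refine ⟨CfaAcc.clos _ _ _ hb ?_ subset_rfl, ?_⟩
    · cases henv with | intro _ hc hl =>
      refine AccEnv.intro _ ?_ ?_
      · intro y
        by_cases hy : y = x
        · subst hy; rw [Function.update_self]; exact h2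
        · rw [Function.update_of_ne hy]; exact hc y
      · intro y
        by_cases hy : y = x
        · subst hy; rw [Function.update_self]; exact hflow
        · rw [Function.update_of_ne hy]; exact hl y
    · show Γ (lbl b) ⊆ Γ ℓ3
      rw [hlb]; exact hres
  | unboxR ℓ1 ℓ2 v hv =>
    cases hacc with | unbox _ _ hbx hcon =>
    cases hbx with | box _ _ ν hvacc hν hap =>
    obtain ⟨e0, hveq, hlw⟩ := approx_boxCore hap (BoxCore.box ℓ1 v)
    subst hveq
    refine ⟨cfa_setLbl hvacc (hlw ▸ hcon e0 hν), ?_⟩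
    rw [setLbl_lbl]; exact subset_rfl
  | runR ℓ1 ℓ2 v ρ hv =>
    cases hacc with | runIn _ _ _ hbx henv hcon =>
    cases hbx with | box _ _ ν hvacc hν hap =>
    obtain ⟨e0, hveq, hlw⟩ := approx_boxCore hap (BoxCore.box ℓ1 v)
    subst hveq
    exact ⟨CfaAcc.clos _ _ _ hvacc henv (hlw ▸ hcon e0 hν), subset_rfl⟩
  | ifTrue ℓ ℓg e1 e2 =>
    cases hacc with | ite _ _ _ _ h1 h2 h3 f2 f3 => exact ⟨h2, f2⟩
  | ifFalse ℓ ℓg e1 e2 =>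
    cases hacc with | ite _ _ _ _ h1 h2 h3 f2 f3 => exact ⟨h3, f3⟩
  | liftApp ℓ2 ℓ3 ℓm m t ρ v hv =>
    cases hacc with | app _ _ _ h1 h2 hside =>
    cases h1 with | clos _ _ _ hm henv hsub =>
    cases hm with | mark _ _ _ ht htf =>
    refine ⟨CfaAcc.mark ℓ3 m _ (CfaAcc.app ℓ3 _ _
      (CfaAcc.clos _ _ _ ht henv subset_rfl) h2 ?_) subset_rfl, subset_rfl⟩
    intro x b hf
    exact hside x b (hsub (htf hf))
  | liftIf ℓ ℓ0 m v e1 e2 hv =>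
    cases hacc with | ite _ _ _ _ h1 h2 h3 f2 f3 =>
    cases h1 with | mark _ _ _ hva hvf =>
    exact ⟨CfaAcc.mark ℓ m _ (CfaAcc.ite ℓ _ _ _ hva h2 h3 f2 f3) subset_rfl, subset_rfl⟩
  | liftUnbox ℓ1 ℓ2 m v hv =>
    cases hacc with | unbox _ _ hm hcon =>
    cases hm with | mark _ _ _ hva hvf =>
    exact ⟨CfaAcc.mark ℓ2 m _ (CfaAcc.unbox ℓ2 _ hva (fun e' hb => hcon e' (hvf hb)))
      subset_rfl, subset_rfl⟩
  | liftRunIn ℓ1 ℓ2 m v ρ hv =>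
    cases hacc with | runIn _ _ _ hm henv hcon =>
    cases hm with | mark _ _ _ hva hvf =>
    exact ⟨CfaAcc.mark ℓ2 m _ (CfaAcc.runIn ℓ2 _ ρ hva henv (fun e' hb => hcon e' (hvf hb)))
      subset_rfl, subset_rfl⟩

theorem coherence_aux {Γ : AbsCache} {ϱ : AbsEnvMap} {n : Nat} {e e' : LExp}
    (hev : Ev n e e') : CfaAcc Γ ϱ e → CfaAcc Γ ϱ e' ∧ Γ (lbl e') ⊆ Γ (lbl e) := by
  induction hev with
  | red _ _ _ hr => exact fun hacc => coherence_red hr hacc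
  | appL m ℓ e1 e1' e2 h ih =>
    intro hacc
    cases hacc with | app _ _ _ h1 h2 hside =>
    obtain ⟨h1', s1⟩ := ih h1
    exact ⟨CfaAcc.app ℓ _ _ h1' h2 (fun x b hf => hside x b (s1 hf)), subset_rfl⟩
  | appR m ℓ v e2 e2' hv h ih =>
    intro hacc
    cases hacc with | app _ _ _ h1 h2 hside =>
    obtain ⟨h2', s2⟩ := ih h2
    exact ⟨CfaAcc.app ℓ _ _ h1 h2'
      (fun x b hf => ⟨s2.trans (hside x b hf).1, (hside x b hf).2⟩), subset_rfl⟩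
  | fnB m ℓ x b b' h ih =>
    intro hacc
    cases hacc with | fn _ _ _ ν hb hν hap =>
    obtain ⟨hb', _⟩ := ih hb
    exact ⟨CfaAcc.fn ℓ x b' ν hb' hν (Approx.redA _ ν _ _ hap (Ev.fnB m ℓ x b b' h)),
      subset_rfl⟩
  | boxC m ℓ b b' h ih =>
    intro hacc
    cases hacc with | box _ _ ν hb hν hap =>
    obtain ⟨hb', _⟩ := ih hb
    exact ⟨CfaAcc.box ℓ b' ν hb' hν (Approx.redA _ ν _ _ hap (Ev.boxC m ℓ b b' h)),
      subset_rfl⟩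
  | unboxC m ℓ t t' h ih =>
    intro hacc
    cases hacc with | unbox _ _ ht hcon =>
    obtain ⟨ht', s⟩ := ih ht
    exact ⟨CfaAcc.unbox ℓ t' ht' (fun e'' hb => hcon e'' (s hb)), subset_rfl⟩
  | runC m ℓ t t' h ih =>
    intro hacc
    cases hacc with | run _ _ ht hcon =>
    obtain ⟨ht', s⟩ := ih ht
    exact ⟨CfaAcc.run ℓ t' ht' (fun e'' hb => hcon e'' (s hb)), subset_rfl⟩
  | runInC m ℓ t t' ρ h ih =>
    intro hacc
    cases hacc with | runIn _ _ _ ht henv hcon =>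
    obtain ⟨ht', s⟩ := ih ht
    exact ⟨CfaAcc.runIn ℓ t' ρ ht' henv (fun e'' hb => hcon e'' (s hb)), subset_rfl⟩
  | closC m ℓ t t' ρ h ih =>
    intro hacc
    cases hacc with | clos _ _ _ ht henv hsub =>
    obtain ⟨ht', s⟩ := ih ht
    exact ⟨CfaAcc.clos ℓ t' ρ ht' henv (s.trans hsub), subset_rfl⟩
  | iteG m ℓ e1 e1' e2 e3 h ih =>
    intro hacc
    cases hacc with | ite _ _ _ _ h1 h2 h3 f2 f3 =>
    obtain ⟨h1', s1⟩ := ih h1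
    exact ⟨CfaAcc.ite ℓ _ _ _ h1' h2 h3 f2 f3, subset_rfl⟩
  | iteT m ℓ v e2 e2' e3 hv h ih =>
    intro hacc
    cases hacc with | ite _ _ _ _ h1 h2 h3 f2 f3 =>
    obtain ⟨h2', s2⟩ := ih h2
    exact ⟨CfaAcc.ite ℓ _ _ _ h1 h2' h3 (s2.trans f2) f3, subset_rfl⟩
  | iteF m ℓ v1 v2 e3 e3' hv1 hv2 h ih =>
    intro hacc
    cases hacc with | ite _ _ _ _ h1 h2 h3 f2 f3 =>
    obtain ⟨h3', s3⟩ := ih h3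
    exact ⟨CfaAcc.ite ℓ _ _ _ h1 h2 h3' f2 (s3.trans f3), subset_rfl⟩
  | markC m ℓ mk t t' h ih =>
    intro hacc
    cases hacc with | mark _ _ _ ht hf' =>
    obtain ⟨ht', s⟩ := ih ht
    exact ⟨CfaAcc.mark ℓ mk t' ht' (s.trans hf'), subset_rfl⟩

end Coherence

/-- CFA Coherence: acceptability of the 0CFA analysis is preserved by evaluation. -/
theorem cfa_coherence (Γ : AbsCache) (ϱ : AbsEnvMap) (n : Nat) (e e' : LExp)
    (hacc : CfaAcc Γ ϱ e) (hev : LExp.Ev n e e') : CfaAcc Γ ϱ e' :=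
  (coherence_aux hev hacc).1
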